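/- For τ = τ₁ + iτ₂ in the upper half-plane and all vectors A, B ∈ ℝ², the Wirtinger derivatives in τ of the pairing g_τ(A,B) satisfy ∂/∂τ [ g_τ(A,B) ] = −(i/τ₂) g_τ(𝒳̄, A) g_τ(𝒳̄, B) and ∂/∂τ̄ [ g_τ(A,B) ] = (i/τ₂) g_τ(𝒳, A) g_τ(𝒳, B), where 𝒳 = (1/√(2τ₂))·(1, τ) and 𝒳̄ = (1/√(2τ₂))·(1, τ̄) in ℂ², and g_τ is extended complex-bilinearly. -/

import Mathlib

open Complex

noncomputable section

/-- Wirtinger derivative `∂/∂τ = ½(∂/∂τ₁ − i ∂/∂τ₂)` of a function of `(τ₁, τ₂) ∈ ℝ²`. -/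
def wderT (f : ℝ → ℝ → ℂ) (t1 t2 : ℝ) : ℂ :=
  (1/2) * (deriv (fun s => f s t2) t1 - Complex.I * deriv (fun s => f t1 s) t2)

/-- Conjugate Wirtinger derivative `∂/∂τ̄ = ½(∂/∂τ₁ + i ∂/∂τ₂)`. -/
def wderTbar (f : ℝ → ℝ → ℂ) (t1 t2 : ℝ) : ℂ :=
  (1/2) * (deriv (fun s => f s t2) t1 + Complex.I * deriv (fun s => f t1 s) t2)

/-- The genus-one Kähler metric `g_τ = (1/τ₂)[[τ₁² + τ₂², −τ₁],[−τ₁, 1]]`, complexified. -/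
def gMat (t1 t2 : ℝ) : Matrix (Fin 2) (Fin 2) ℂ :=
  ((t2 : ℂ))⁻¹ • !![(t1 : ℂ)^2 + (t2 : ℂ)^2, -(t1 : ℂ); -(t1 : ℂ), 1]

/-- The complex-bilinear extension of `g_τ` to `ℂ²`. -/
def gForm (t1 t2 : ℝ) (A B : Fin 2 → ℂ) : ℂ :=
  ∑ j : Fin 2, ∑ l : Fin 2, gMat t1 t2 j l * A j * B l

/-- The vector `𝒳 = (1/√(2τ₂))·(1, τ) ∈ ℂ²`. -/
def Xvec (t1 t2 : ℝ) : Fin 2 → ℂ :=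
  fun j => ((Real.sqrt (2 * t2) : ℂ))⁻¹ * ![1, (t1 : ℂ) + Complex.I * t2] j

/-- The conjugate vector `𝒳̄ = (1/√(2τ₂))·(1, τ̄) ∈ ℂ²`. -/
def Xbarvec (t1 t2 : ℝ) : Fin 2 → ℂ :=
  fun j => ((Real.sqrt (2 * t2) : ℂ))⁻¹ * ![1, (t1 : ℂ) - Complex.I * t2] j

lemma gexp (a b : ℝ) (A B : Fin 2 → ℂ) :
    gForm a b A B
      = (b:ℂ)⁻¹ * (((a:ℂ)^2+(b:ℂ)^2)*(A 0)*(B 0) - (a:ℂ)*((A 0)*(B 1)+(A 1)*(B 0)) + (A 1)*(B 1)) := by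
  simp [gForm, gMat, Fin.sum_univ_two]
  ring

lemma deriv1 (t1 t2 : ℝ) (a0 a1 b0 b1 : ℂ) :
    HasDerivAt (fun s : ℝ => ((t2:ℂ))⁻¹ * (((s:ℂ)^2+(t2:ℂ)^2)*a0*b0 - (s:ℂ)*(a0*b1+a1*b0) + a1*b1))
      ((t2:ℂ)⁻¹ * (2*(t1:ℂ)*a0*b0 - (a0*b1+a1*b0))) t1 := by
  have h : HasDerivAt (fun z : ℂ => ((t2:ℂ))⁻¹ * ((z^2+(t2:ℂ)^2)*a0*b0 - z*(a0*b1+a1*b0) + a1*b1))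
      ((t2:ℂ)⁻¹ * (2*(t1:ℂ)*a0*b0 - (a0*b1+a1*b0))) (t1:ℂ) := by
    have h1 : HasDerivAt (fun z : ℂ => (z^2+(t2:ℂ)^2)*a0*b0 - z*(a0*b1+a1*b0) + a1*b1)
        (2*(t1:ℂ)*a0*b0 - (a0*b1+a1*b0)) (t1:ℂ) := by
      have := (((((hasDerivAt_pow 2 (t1:ℂ)).add_const ((t2:ℂ)^2)).mul_const a0).mul_const b0).sub
        ((hasDerivAt_id (t1:ℂ)).mul_const (a0*b1+a1*b0))).add_const (a1*b1)
      refine this.congr_deriv ?_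
      ring
    exact h1.const_mul _
  exact h.comp_ofReal

lemma deriv2 (t1 t2 : ℝ) (ht : 0 < t2) (a0 a1 b0 b1 : ℂ) :
    HasDerivAt (fun s : ℝ => ((s:ℂ))⁻¹ * (((t1:ℂ)^2+(s:ℂ)^2)*a0*b0 - (t1:ℂ)*(a0*b1+a1*b0) + a1*b1))
      (-((t2:ℂ)^2)⁻¹ * (((t1:ℂ)^2+(t2:ℂ)^2)*a0*b0 - (t1:ℂ)*(a0*b1+a1*b0) + a1*b1)
        + (t2:ℂ)⁻¹ * (2*(t2:ℂ)*a0*b0)) t2 := by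
  have ht2 : ((t2:ℂ)) ≠ 0 := by exact_mod_cast ht.ne'
  have h : HasDerivAt (fun z : ℂ => z⁻¹ * (((t1:ℂ)^2+z^2)*a0*b0 - (t1:ℂ)*(a0*b1+a1*b0) + a1*b1))
      (-((t2:ℂ)^2)⁻¹ * (((t1:ℂ)^2+(t2:ℂ)^2)*a0*b0 - (t1:ℂ)*(a0*b1+a1*b0) + a1*b1)
        + (t2:ℂ)⁻¹ * (2*(t2:ℂ)*a0*b0)) (t2:ℂ) := by
    have hK : HasDerivAt (fun z : ℂ => ((t1:ℂ)^2+z^2)*a0*b0 - (t1:ℂ)*(a0*b1+a1*b0) + a1*b1)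
        (2*(t2:ℂ)*a0*b0) (t2:ℂ) := by
      have := ((((hasDerivAt_pow 2 (t2:ℂ)).const_add ((t1:ℂ)^2)).mul_const a0).mul_const b0).sub_const
        ((t1:ℂ)*(a0*b1+a1*b0)) |>.add_const (a1*b1)
      refine this.congr_deriv ?_
      ring
    exact (hasDerivAt_inv ht2).mul hK
  exact h.comp_ofReal

/-- Variation of the genus-one Kähler metric pairing over Teichmüller space:
`∂_τ g_τ(A,B) = −(i/τ₂) g_τ(𝒳̄,A) g_τ(𝒳̄,B)` and `∂_τ̄ g_τ(A,B) = (i/τ₂) g_τ(𝒳,A) g_τ(𝒳,B)`. -/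
theorem statement3 (t1 t2 : ℝ) (ht : 0 < t2) (A B : Fin 2 → ℝ) :
    wderT (fun a b => gForm a b (fun j => (A j : ℂ)) (fun j => (B j : ℂ))) t1 t2
        = -(Complex.I / (t2 : ℂ)) *
            gForm t1 t2 (Xbarvec t1 t2) (fun j => (A j : ℂ)) *
            gForm t1 t2 (Xbarvec t1 t2) (fun j => (B j : ℂ)) ∧
    wderTbar (fun a b => gForm a b (fun j => (A j : ℂ)) (fun j => (B j : ℂ))) t1 t2
        = (Complex.I / (t2 : ℂ)) *
            gForm t1 t2 (Xvec t1 t2) (fun j => (A j : ℂ)) *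
            gForm t1 t2 (Xvec t1 t2) (fun j => (B j : ℂ)) := by
  set a0 : ℂ := (A 0 : ℂ)
  set a1 : ℂ := (A 1 : ℂ)
  set b0 : ℂ := (B 0 : ℂ)
  set b1 : ℂ := (B 1 : ℂ)
  have hfa : (fun s : ℝ => gForm s t2 (fun j => (A j : ℂ)) (fun j => (B j : ℂ)))
      = fun s : ℝ => ((t2:ℂ))⁻¹ * (((s:ℂ)^2+(t2:ℂ)^2)*a0*b0 - (s:ℂ)*(a0*b1+a1*b0) + a1*b1) :=
    funext fun s => gexp s t2 _ _
  have hfb : (fun s : ℝ => gForm t1 s (fun j => (A j : ℂ)) (fun j => (B j : ℂ)))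
      = fun s : ℝ => ((s:ℂ))⁻¹ * (((t1:ℂ)^2+(s:ℂ)^2)*a0*b0 - (t1:ℂ)*(a0*b1+a1*b0) + a1*b1) :=
    funext fun s => gexp t1 s _ _
  have h1 := (deriv1 t1 t2 a0 a1 b0 b1).deriv
  have h2 := (deriv2 t1 t2 ht a0 a1 b0 b1).deriv
  rw [← hfa] at h1
  rw [← hfb] at h2
  -- the scaling factor
  set s : ℂ := ((Real.sqrt (2 * t2) : ℂ)) with hs
  have hspos : 0 < Real.sqrt (2 * t2) := Real.sqrt_pos.mpr (by linarith)
  have hsne : s ≠ 0 := by rw [hs]; exact_mod_cast hspos.ne'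
  have hs2 : s^2 = 2 * (t2:ℂ) := by
    rw [hs]
    norm_cast
    rw [Real.sq_sqrt (by linarith)]
  have ht2eq : ((t2:ℂ)) = s^2 / 2 := by rw [hs2]; ring
  have hX0 : Xbarvec t1 t2 0 = s⁻¹ := by simp [Xbarvec, hs]
  have hX1 : Xbarvec t1 t2 1 = s⁻¹ * ((t1:ℂ) - Complex.I * t2) := by simp [Xbarvec, hs]
  have hY0 : Xvec t1 t2 0 = s⁻¹ := by simp [Xvec, hs]
  have hY1 : Xvec t1 t2 1 = s⁻¹ * ((t1:ℂ) + Complex.I * t2) := by simp [Xvec, hs]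
  have hI2 : Complex.I^2 = -1 := Complex.I_sq
  have hI3 : Complex.I^3 = -Complex.I := by rw [pow_succ, hI2]; ring
  have hI4 : Complex.I^4 = 1 := by rw [show (4:ℕ) = 2 + 2 from rfl, pow_add, hI2]; ring
  have ht2ne : ((t2:ℂ)) ≠ 0 := by exact_mod_cast ht.ne'
  have hss : s⁻¹ * s⁻¹ = (2 * (t2:ℂ))⁻¹ := by
    rw [← mul_inv]; congr 1; linear_combination hs2
  have hGA : gForm t1 t2 (Xbarvec t1 t2) (fun j => (A j : ℂ))
      = s⁻¹ * (((t2:ℂ) + Complex.I * t1) * a0 - Complex.I * a1) := by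
    rw [gexp, hX0, hX1]; field_simp; ring
  have hGB : gForm t1 t2 (Xbarvec t1 t2) (fun j => (B j : ℂ))
      = s⁻¹ * (((t2:ℂ) + Complex.I * t1) * b0 - Complex.I * b1) := by
    rw [gexp, hX0, hX1]; field_simp; ring
  have hHA : gForm t1 t2 (Xvec t1 t2) (fun j => (A j : ℂ))
      = s⁻¹ * (((t2:ℂ) - Complex.I * t1) * a0 + Complex.I * a1) := by
    rw [gexp, hY0, hY1]; field_simp; ring
  have hHB : gForm t1 t2 (Xvec t1 t2) (fun j => (B j : ℂ))
      = s⁻¹ * (((t2:ℂ) - Complex.I * t1) * b0 + Complex.I * b1) := by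
    rw [gexp, hY0, hY1]; field_simp; ring
  constructor
  · rw [wderT]
    rw [h1, h2, hGA, hGB]
    rw [show -(Complex.I / (t2:ℂ)) * (s⁻¹ * (((t2:ℂ) + Complex.I * t1) * a0 - Complex.I * a1)) *
          (s⁻¹ * (((t2:ℂ) + Complex.I * t1) * b0 - Complex.I * b1))
        = -(Complex.I / (t2:ℂ)) * (s⁻¹ * s⁻¹) * ((((t2:ℂ) + Complex.I * t1) * a0 - Complex.I * a1) *
          ((((t2:ℂ) + Complex.I * t1)) * b0 - Complex.I * b1)) from by ring, hss]
    field_simp [ht2ne]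
    ring_nf
    simp only [hI2, hI3, hI4]
    ring
  · rw [wderTbar]
    rw [h1, h2, hHA, hHB]
    rw [show (Complex.I / (t2:ℂ)) * (s⁻¹ * (((t2:ℂ) - Complex.I * t1) * a0 + Complex.I * a1)) *
          (s⁻¹ * (((t2:ℂ) - Complex.I * t1) * b0 + Complex.I * b1))
        = (Complex.I / (t2:ℂ)) * (s⁻¹ * s⁻¹) * ((((t2:ℂ) - Complex.I * t1) * a0 + Complex.I * a1) *
          ((((t2:ℂ) - Complex.I * t1)) * b0 + Complex.I * b1)) from by ring, hss]
    field_simp [ht2ne]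
    ring_nf
    simp only [hI2, hI3, hI4]
    ring
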